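/- For all natural numbers i, j₁, j₂ and real k₁, k₂, b_{i,j₁+j₂,k₁+k₂} = Σ_{r=0}^{i} C(i,r) · b_{r,j₁,k₁} · b_{i-r,j₂,k₂} (convolution identity for moment generating Stirling numbers). -/

import Mathlib

/-!
`msn i j k` is the `j`-th forward difference (step `1`) of `x ↦ x ^ i` at `k`. Since
`Δ^[j₁ + j₂] = Δ^[j₁] ∘ Δ^[j₂]` and differencing commutes with translation, the left-hand side is
`Δ^[j₁]` in `x` applied to `Δ^[j₂]` in `y` of `(x + y) ^ i` at `(k₁, k₂)`. Expanding `(x + y) ^ i`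
binomially, each term is a product of a function of `x` and a function of `y`, on which the two
difference operators act separately.
-/

open Finset

noncomputable def msn (i j : ℕ) (k : ℝ) : ℝ :=
  ∑ r ∈ Finset.range (j + 1), (j.choose r : ℝ) * (-1 : ℝ) ^ (j - r) * ((r : ℝ) + k) ^ i

section
variable {M G : Type*} [AddCommMonoid M] [AddCommGroup G] (h : M)

theorem fwdDiff_iter_iter_comp_add (g : M → G) (m n : ℕ) (a b : M) :
    (fwdDiff h)^[m] (fun x ↦ (fwdDiff h)^[n] (fun y ↦ g (x + y)) b) a =
      (fwdDiff h)^[m + n] g (a + b) := by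
  have inner (x : M) : (fwdDiff h)^[n] (fun y ↦ g (x + y)) b = (fwdDiff h)^[n] g (x + b) := by
    simpa only [add_comm b x, add_comm _ x] using fwdDiff_iter_comp_add h g x n b
  simp only [inner, Function.iterate_add_apply]
  exact fwdDiff_iter_comp_add h _ b m a

theorem fwdDiff_iter_iter_finsetSum {ι : Type*} (s : Finset ι) (g : ι → M → M → G)
    (m n : ℕ) (a b : M) :
    (fwdDiff h)^[m] (fun x ↦ (fwdDiff h)^[n] (fun y ↦ ∑ r ∈ s, g r x y) b) a =
      ∑ r ∈ s, (fwdDiff h)^[m] (fun x ↦ (fwdDiff h)^[n] (g r x) b) a := by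
  simp only [← Finset.sum_fn, fwdDiff_iter_finsetSum, Finset.sum_apply]

theorem fwdDiff_iter_iter_mul {R : Type*} [CommRing R] (u v : M → R) (m n : ℕ) (a b : M) :
    (fwdDiff h)^[m] (fun x ↦ (fwdDiff h)^[n] (fun y ↦ u x * v y) b) a =
      (fwdDiff h)^[m] u a * (fwdDiff h)^[n] v b := by
  have inner (x : M) : (fwdDiff h)^[n] (fun y ↦ u x * v y) b = (fwdDiff h)^[n] v b * u x :=
    (congr_fun (fwdDiff_iter_const_smul h (u x) v n) b).trans (mul_comm _ _)
  simp only [inner]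
  exact (congr_fun (fwdDiff_iter_const_smul h ((fwdDiff h)^[n] v b) u m) a).trans (mul_comm _ _)
end

theorem msn_eq_fwdDiff_iter (i j : ℕ) (k : ℝ) : msn i j k = (fwdDiff 1)^[j] (· ^ i) k := by
  rw [fwdDiff_iter_eq_sum_shift, msn]
  refine sum_congr rfl fun r _ ↦ ?_
  simp only [zsmul_eq_mul, nsmul_eq_mul, mul_one]
  push_cast
  ring

theorem stmt (i j₁ j₂ : ℕ) (k₁ k₂ : ℝ) : msn i (j₁ + j₂) (k₁ + k₂) = ∑ r ∈ Finset.range (i + 1), (i.choose r : ℝ) * msn r j₁ k₁ * msn (i - r) j₂ k₂ := by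
  simp only [msn_eq_fwdDiff_iter, ← fwdDiff_iter_iter_comp_add, add_pow, fwdDiff_iter_iter_finsetSum]
  refine sum_congr rfl fun r _ ↦ ?_
  have hc : (fwdDiff (1 : ℝ))^[j₁] (fun x ↦ (i.choose r : ℝ) * x ^ r) k₁ =
      (i.choose r : ℝ) * (fwdDiff 1)^[j₁] (· ^ r) k₁ :=
    congr_fun (fwdDiff_iter_const_smul 1 (i.choose r : ℝ) (· ^ r) j₁) k₁
  simp only [mul_right_comm _ _ (i.choose r : ℝ), mul_comm _ (i.choose r : ℝ)]
  rw [fwdDiff_iter_iter_mul, hc]
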